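/- Let F be a Fréchet space and {X_n} a sequence of F-valued random variables. Suppose for every L > 0 there is a decomposition X_n = Y_n^L + Z_n^L where the laws of {Y_n^L}_n are tight on F, and for every η > 0, lim_{L→∞} sup_n P(ρ(Z_n^L, 0) > η) = 0 (ρ the metric of F). Then the laws of {X_n} are tight on F. -/

import Mathlib

open MeasureTheory Filter Topology Metric

/-!
For `η, δ > 0` choose `L` with `sup_n P(dist(Z_n^L, 0) > η) < δ / 2` and a compact `K` carrying
all `Y_n^L` up to probability `δ / 2`; by translation invariance `X_n` then lies in the closed
`η`-thickening of `K` up to probability `δ`. Running this along `η_j = 1 / (j + 1)` with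
summable errors `δ_j`, the intersection `⋂ j, cthickening η_j K_j` is closed and totally
bounded, hence compact as `F` is complete, and misses each `X_n` with probability `≤ ∑ δ_j`.
-/

theorem isCompact_iInter_cthickening {α ι : Type*} [PseudoMetricSpace α] [CompleteSpace α]
    {l : Filter ι} [l.NeBot] {K : ι → Set α} (hK : ∀ i, IsCompact (K i)) {r : ι → ℝ}
    (hr : Tendsto r l (𝓝 0)) : IsCompact (⋂ i, cthickening (r i) (K i)) := by
  refine (totallyBounded_iff.mpr fun ε hε => ?_).isCompact_of_isClosed
    (isClosed_iInter fun i => isClosed_cthickening)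
  obtain ⟨i, hi⟩ := (hr.eventually (gt_mem_nhds (half_pos hε))).exists
  obtain ⟨t, ht, hKt⟩ := totallyBounded_iff.mp (hK i).totallyBounded (ε / 2) (half_pos hε)
  refine ⟨t, ht, fun x hx => ?_⟩
  have hx : x ∈ thickening (ε / 2) (K i) :=
    cthickening_subset_thickening' (half_pos hε) hi _ (Set.mem_iInter.mp hx i)
  obtain ⟨k, hk, hxk⟩ := mem_thickening_iff.mp hx
  obtain ⟨y, hy, hky⟩ := Set.mem_iUnion₂.mp (hKt hk)
  exact Set.mem_iUnion₂.mpr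
    ⟨y, hy, mem_ball.mpr <| by linarith [dist_triangle x k y, mem_ball.mp hky]⟩

theorem exists_isCompact_measure_notMem_le_of_cthickening {α ι Ω : Type*} [PseudoMetricSpace α]
    [CompleteSpace α] [MeasurableSpace Ω] (P : Measure Ω) (X : ι → Ω → α)
    (h : ∀ η > (0 : ℝ), ∀ δ > (0 : ℝ), ∃ K : Set α, IsCompact K ∧
      ∀ i, P {ω | X i ω ∉ cthickening η K} ≤ ENNReal.ofReal δ) :
    ∀ ε > (0 : ℝ), ∃ K : Set α, IsCompact K ∧ ∀ i, P {ω | X i ω ∉ K} ≤ ENNReal.ofReal ε := by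
  intro ε hε
  obtain ⟨δ, hδ, hδε⟩ := ENNReal.exists_pos_sum_of_countable (ENNReal.ofReal_pos.mpr hε).ne' ℕ
  choose K hK hXK using fun j : ℕ => h (1 / (j + 1)) Nat.one_div_pos_of_nat (δ j) (hδ j)
  refine ⟨⋂ j : ℕ, cthickening (1 / ((j : ℝ) + 1)) (K j),
    isCompact_iInter_cthickening hK tendsto_one_div_add_atTop_nhds_zero_nat, fun i => ?_⟩
  calc P {ω | X i ω ∉ ⋂ j : ℕ, cthickening (1 / ((j : ℝ) + 1)) (K j)}
      = P (⋃ j : ℕ, {ω | X i ω ∉ cthickening (1 / ((j : ℝ) + 1)) (K j)}) := by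
        simp only [Set.mem_iInter, not_forall, Set.ofPred_exists]
    _ ≤ ∑' j : ℕ, P {ω | X i ω ∉ cthickening (1 / ((j : ℝ) + 1)) (K j)} := measure_iUnion_le _
    _ ≤ ∑' j, (δ j : ENNReal) :=
        ENNReal.tsum_le_tsum fun j => (hXK j i).trans_eq (ENNReal.ofReal_coe_nnreal)
    _ ≤ ENNReal.ofReal ε := hδε.le

theorem add_mem_cthickening {F : Type*} [AddCommGroup F] [PseudoMetricSpace F]
    (hinv : ∀ x y z : F, dist (x + z) (y + z) = dist x y) {K : Set F} {η : ℝ} {y z : F}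
    (hy : y ∈ K) (hz : dist z 0 ≤ η) : y + z ∈ cthickening η K :=
  mem_cthickening_of_dist_le _ y _ _ hy <| by rwa [← hinv z 0 y, zero_add, add_comm] at hz

theorem measure_add_notMem_cthickening_le {F Ω : Type*} [AddCommGroup F] [PseudoMetricSpace F]
    (hinv : ∀ x y z : F, dist (x + z) (y + z) = dist x y) [MeasurableSpace Ω] (P : Measure Ω)
    (Y Z : Ω → F) (K : Set F) (η : ℝ) :
    P {ω | Y ω + Z ω ∉ cthickening η K} ≤ P {ω | Y ω ∉ K} + P {ω | η < dist (Z ω) 0} := by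
  refine (measure_mono fun ω hω => ?_).trans (measure_union_le _ _)
  by_contra hYZ
  simp only [Set.mem_union, Set.mem_ofPred_eq, not_or, not_not, not_lt] at hYZ
  exact hω (add_mem_cthickening hinv hYZ.1 hYZ.2)

theorem tightness_decomposition_general {F : Type*} [AddCommGroup F] [MetricSpace F] [CompleteSpace F]
    (hinv : ∀ x y z : F, dist (x + z) (y + z) = dist x y)
    {Ω : Type*} [MeasurableSpace Ω] (P : Measure Ω)
    (X : ℕ → Ω → F)
    (Y Z : ℝ → ℕ → Ω → F)
    (hdec : ∀ L > (0 : ℝ), ∀ n ω, X n ω = Y L n ω + Z L n ω)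
    (hYtight : ∀ L > (0 : ℝ), ∀ ε > (0 : ℝ), ∃ K : Set F, IsCompact K ∧
      ∀ n, P {ω | Y L n ω ∉ K} ≤ ENNReal.ofReal ε)
    (hZ : ∀ η > (0 : ℝ),
      Tendsto (fun L : ℝ => ⨆ n, P {ω | η < dist (Z L n ω) 0}) atTop (𝓝 0)) :
    ∀ ε > (0 : ℝ), ∃ K : Set F, IsCompact K ∧
      ∀ n, P {ω | X n ω ∉ K} ≤ ENNReal.ofReal ε := by
  refine exists_isCompact_measure_notMem_le_of_cthickening P X fun η hη δ hδ => ?_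
  obtain ⟨L, hZL, hL⟩ := (((hZ η hη).eventually_lt_const
    (ENNReal.ofReal_pos.mpr (half_pos hδ))).and (eventually_gt_atTop 0)).exists
  obtain ⟨K, hK, hYK⟩ := hYtight L hL (δ / 2) (half_pos hδ)
  refine ⟨K, hK, fun n => ?_⟩
  calc P {ω | X n ω ∉ cthickening η K}
      = P {ω | Y L n ω + Z L n ω ∉ cthickening η K} := by simp only [hdec L hL n]
    _ ≤ P {ω | Y L n ω ∉ K} + P {ω | η < dist (Z L n ω) 0} :=
        measure_add_notMem_cthickening_le hinv P _ _ K η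
    _ ≤ ENNReal.ofReal (δ / 2) + ENNReal.ofReal (δ / 2) :=
        add_le_add (hYK n) ((le_iSup (fun n => P {ω | η < dist (Z L n ω) 0}) n).trans hZL.le)
    _ = ENNReal.ofReal δ := by
        rw [← ENNReal.ofReal_add (half_pos hδ).le (half_pos hδ).le, add_halves]

/-- Tightness via decomposition: if `X_n = Y_n^L + Z_n^L` where for each `L` the
`{Y_n^L}_n` induce tight laws on the complete metric group `F` (translation-invariant
metric), and `sup_n P(dist(Z_n^L, 0) > η) → 0` as `L → ∞` for every `η > 0`, then the
laws of `{X_n}` are tight on `F`. -/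
theorem tightness_decomposition {F : Type*} [AddCommGroup F] [MetricSpace F] [CompleteSpace F]
    [MeasurableSpace F] [BorelSpace F]
    (hinv : ∀ x y z : F, dist (x + z) (y + z) = dist x y)
    {Ω : Type*} [MeasurableSpace Ω] (P : Measure Ω) [IsProbabilityMeasure P]
    (X : ℕ → Ω → F) (hX : ∀ n, Measurable (X n))
    (Y Z : ℝ → ℕ → Ω → F)
    (hdec : ∀ L > (0 : ℝ), ∀ n ω, X n ω = Y L n ω + Z L n ω)
    (hYtight : ∀ L > (0 : ℝ), ∀ ε > (0 : ℝ), ∃ K : Set F, IsCompact K ∧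
      ∀ n, P {ω | Y L n ω ∉ K} ≤ ENNReal.ofReal ε)
    (hZ : ∀ η > (0 : ℝ),
      Tendsto (fun L : ℝ => ⨆ n, P {ω | η < dist (Z L n ω) 0}) atTop (𝓝 0)) :
    ∀ ε > (0 : ℝ), ∃ K : Set F, IsCompact K ∧
      ∀ n, P {ω | X n ω ∉ K} ≤ ENNReal.ofReal ε :=
  tightness_decomposition_general hinv P X Y Z hdec hYtight hZ
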